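/- arXiv:1702.01083 — 2 statements merged into one kernel-verified Lean document; each statement's English description precedes it below -/
import Mathlib

section
/- Let M be an MM between S and T containing a pair (a, d) with a ∈ S and d ∈ T, and suppose there exist b ∈ T and c ∈ S with a < b < c < d such that the pairs (a, b) and (c, d) do not belong to M. Then M' := (M \ {(a, d)}) ∪ {(a, b), (c, d)} is an MM between S and T whose cost is strictly smaller than the cost of M. -/
/-!
Both endpoints of `(a, d)` stay matched, through `(a, b)` and `(c, d)`, so coverage survives;
the cost changes by `(b - a) + (d - c) - (d - a) = -(c - b) < 0`.
-/

open Finset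

/-- A many-to-many matching (MM) between point sets `S` and `T` on the real line:
a set of pairs `(s, t)` with `s ∈ S`, `t ∈ T`, covering every point of `S` and of `T`. -/
def IsMM (S T : Finset ℝ) (M : Finset (ℝ × ℝ)) : Prop :=
  (∀ p ∈ M, p.1 ∈ S ∧ p.2 ∈ T) ∧
  (∀ s ∈ S, ∃ t, (s, t) ∈ M) ∧
  (∀ t ∈ T, ∃ s, (s, t) ∈ M)

/-- The cost of a matching: the sum of the distances of its pairs. -/
noncomputable def mmCost (M : Finset (ℝ × ℝ)) : ℝ := ∑ p ∈ M, |p.1 - p.2|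

/-- A minimum-cost MM. -/
def IsMinMM (S T : Finset ℝ) (M : Finset (ℝ × ℝ)) : Prop :=
  IsMM S T M ∧ ∀ M' : Finset (ℝ × ℝ), IsMM S T M' → mmCost M ≤ mmCost M'

theorem IsMM.sdiff_singleton_union {S T : Finset ℝ} {M N : Finset (ℝ × ℝ)} {p : ℝ × ℝ}
    (hM : IsMM S T M) (hN : ∀ q ∈ N, q.1 ∈ S ∧ q.2 ∈ T)
    (hfst : ∃ t, (p.1, t) ∈ N) (hsnd : ∃ s, (s, p.2) ∈ N) :
    IsMM S T (M \ {p} ∪ N) := by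
  obtain ⟨hpairs, hcovS, hcovT⟩ := hM
  refine ⟨fun q hq => ?_, fun s hs => ?_, fun t ht => ?_⟩
  · rcases mem_union.1 hq with hq | hq
    · exact hpairs q (mem_sdiff.1 hq).1
    · exact hN q hq
  · obtain ⟨t, hst⟩ := hcovS s hs
    by_cases hp : (s, t) = p
    · obtain ⟨t', ht'⟩ := hfst
      exact ⟨t', mem_union_right _ (by subst hp; exact ht')⟩
    · exact ⟨t, mem_union_left _ (mem_sdiff.2 ⟨hst, by simpa using hp⟩)⟩
  · obtain ⟨s, hst⟩ := hcovT t ht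
    by_cases hp : (s, t) = p
    · obtain ⟨s', hs'⟩ := hsnd
      exact ⟨s', mem_union_right _ (by subst hp; exact hs')⟩
    · exact ⟨s, mem_union_left _ (mem_sdiff.2 ⟨hst, by simpa using hp⟩)⟩

theorem mmCost_sdiff_singleton_union {M N : Finset (ℝ × ℝ)} {p : ℝ × ℝ}
    (hp : p ∈ M) (hMN : Disjoint M N) :
    mmCost (M \ {p} ∪ N) = mmCost M - |p.1 - p.2| + mmCost N := by
  unfold mmCost
  rw [sum_union (disjoint_of_subset_left sdiff_subset hMN),
    sum_sdiff_eq_sub (singleton_subset_iff.2 hp), sum_singleton]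

theorem mmCost_pair {p q : ℝ × ℝ} (hpq : p ≠ q) :
    mmCost {p, q} = |p.1 - p.2| + |q.1 - q.2| :=
  sum_pair hpq

theorem stmt_3_general (S T : Finset ℝ)
    (M : Finset (ℝ × ℝ)) (hM : IsMM S T M)
    (a d : ℝ) (ha : a ∈ S) (hd : d ∈ T) (had : (a, d) ∈ M)
    (b c : ℝ) (hb : b ∈ T) (hc : c ∈ S)
    (h1 : a < b) (h2 : b < c) (h3 : c < d)
    (hab : (a, b) ∉ M) (hcd : (c, d) ∉ M) :
    IsMM S T ((M \ {(a, d)}) ∪ {(a, b), (c, d)}) ∧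
      mmCost ((M \ {(a, d)}) ∪ {(a, b), (c, d)}) < mmCost M := by
  refine ⟨hM.sdiff_singleton_union ?_ ⟨b, by simp⟩ ⟨c, by simp⟩, ?_⟩
  · simp only [mem_insert, mem_singleton, forall_eq_or_imp, forall_eq]
    exact ⟨⟨ha, hb⟩, hc, hd⟩
  have hdisjM : Disjoint M {(a, b), (c, d)} := by
    simp only [disjoint_insert_right, disjoint_singleton_right]
    exact ⟨hab, hcd⟩
  have hne : ((a, b) : ℝ × ℝ) ≠ (c, d) := fun h => (h1.trans h2).ne (congrArg Prod.fst h)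
  rw [mmCost_sdiff_singleton_union had hdisjM, mmCost_pair hne,
    abs_of_neg (by linarith : a - d < 0), abs_of_neg (by linarith : a - b < 0),
    abs_of_neg (by linarith : c - d < 0)]
  linarith

/-- Replacing a long pair `(a, d)` by the two pairs `(a, b)` and `(c, d)`
(with `a < b < c < d`, the latter two absent from `M`) yields an MM of strictly
smaller cost. -/
theorem stmt_3 (S T : Finset ℝ) (hdisj : Disjoint S T) (hS : S.Nonempty) (hT : T.Nonempty)
    (M : Finset (ℝ × ℝ)) (hM : IsMM S T M)
    (a d : ℝ) (ha : a ∈ S) (hd : d ∈ T) (had : (a, d) ∈ M)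
    (b c : ℝ) (hb : b ∈ T) (hc : c ∈ S)
    (h1 : a < b) (h2 : b < c) (h3 : c < d)
    (hab : (a, b) ∉ M) (hcd : (c, d) ∉ M) :
    IsMM S T ((M \ {(a, d)}) ∪ {(a, b), (c, d)}) ∧
      mmCost ((M \ {(a, d)}) ∪ {(a, b), (c, d)}) < mmCost M :=
  stmt_3_general S T M hM a d ha hd had b c hb hc h1 h2 h3 hab hcd
end

section
/- Let M be a minimum-cost MM between S and T and let (a, d) ∈ M with a ∈ S and d ∈ T. If a < d, then there do not exist b ∈ T and c ∈ S with a < b < c < d; if d < a, then there do not exist c ∈ S and b ∈ T with d < c < b < a. (Equivalently, every matched pair joins points of two consecutive maximal blocks of the partition of S ∪ T into maximal subsets alternating between S and T.) -/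
/-!
If `(a, d)` lies in an MM `M`, `b ∈ T` and `c ∈ S`, then replacing the pair `(a, d)` by the two
pairs `(a, b)` and `(c, d)` still covers every point, so minimality of `M` forces
`|a - d| ≤ |a - b| + |c - d|`. When `b` and `c` lie strictly between `a` and `d` in the order
`a, b, c, d` (or its mirror image), the right-hand side is `|a - d| - |b - c| < |a - d|`.
-/

open Finset

lemma mmCost_insert_le (x : ℝ × ℝ) (M : Finset (ℝ × ℝ)) :
    mmCost (insert x M) ≤ |x.1 - x.2| + mmCost M := by
  unfold mmCost
  by_cases hx : x ∈ M
  · rw [insert_eq_self.2 hx]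
    linarith [abs_nonneg (x.1 - x.2)]
  · rw [sum_insert hx]

lemma mmCost_erase {x : ℝ × ℝ} {M : Finset (ℝ × ℝ)} (hx : x ∈ M) :
    mmCost (M.erase x) = mmCost M - |x.1 - x.2| := by
  unfold mmCost
  linarith [add_sum_erase M (fun p => |p.1 - p.2|) hx]

lemma IsMM.exchange {S T : Finset ℝ} {M : Finset (ℝ × ℝ)} (hM : IsMM S T M)
    {a b c d : ℝ} (had : (a, d) ∈ M) (hb : b ∈ T) (hc : c ∈ S) :
    IsMM S T (insert (a, b) (insert (c, d) (M.erase (a, d)))) := by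
  obtain ⟨hmem, hcovS, hcovT⟩ := hM
  refine ⟨?_, fun s hs => ?_, fun t ht => ?_⟩
  · intro p hp
    simp only [mem_insert] at hp
    rcases hp with rfl | rfl | hp
    · exact ⟨(hmem _ had).1, hb⟩
    · exact ⟨hc, (hmem _ had).2⟩
    · exact hmem p (mem_of_mem_erase hp)
  · obtain ⟨t, hst⟩ := hcovS s hs
    by_cases hs_a : s = a
    · exact ⟨b, by simp [hs_a]⟩
    · exact ⟨t, by simp [hs_a, hst]⟩
  · obtain ⟨s, hst⟩ := hcovT t ht
    by_cases ht_d : t = d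
    · exact ⟨c, by simp [ht_d]⟩
    · exact ⟨s, by simp [ht_d, hst]⟩

lemma IsMinMM.abs_sub_le {S T : Finset ℝ} {M : Finset (ℝ × ℝ)} (hM : IsMinMM S T M)
    {a b c d : ℝ} (had : (a, d) ∈ M) (hb : b ∈ T) (hc : c ∈ S) :
    |a - d| ≤ |a - b| + |c - d| := by
  have hmin := hM.2 _ (hM.1.exchange had hb hc)
  have hab := mmCost_insert_le (a, b) (insert (c, d) (M.erase (a, d)))
  have hcd := mmCost_insert_le (c, d) (M.erase (a, d))
  have had' := mmCost_erase had
  dsimp only at hab hcd had'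
  linarith

theorem stmt_4_general (S T : Finset ℝ)
    (M : Finset (ℝ × ℝ)) (hM : IsMinMM S T M)
    (a d : ℝ) (had : (a, d) ∈ M) :
    (a < d → ¬ ∃ b ∈ T, ∃ c ∈ S, a < b ∧ b < c ∧ c < d) ∧
    (d < a → ¬ ∃ c ∈ S, ∃ b ∈ T, d < c ∧ c < b ∧ b < a) := by
  constructor
  · rintro had_lt ⟨b, hb, c, hc, hab, hbc, hcd⟩
    have hcost := hM.abs_sub_le had hb hc
    rw [abs_of_neg (sub_neg.2 had_lt), abs_of_neg (sub_neg.2 hab),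
      abs_of_neg (sub_neg.2 hcd)] at hcost
    linarith
  · rintro hda_lt ⟨c, hc, b, hb, hdc, hcb, hba⟩
    have hcost := hM.abs_sub_le had hb hc
    rw [abs_of_pos (sub_pos.2 hda_lt), abs_of_pos (sub_pos.2 hba),
      abs_of_pos (sub_pos.2 hdc)] at hcost
    linarith

/-- Every pair of a minimum-cost MM joins points of two consecutive maximal blocks:
if `(a, d) ∈ M` with `a < d` then there are no `b ∈ T`, `c ∈ S` with `a < b < c < d`;
if `d < a` then there are no `c ∈ S`, `b ∈ T` with `d < c < b < a`. -/
theorem stmt_4 (S T : Finset ℝ) (hdisj : Disjoint S T) (hS : S.Nonempty) (hT : T.Nonempty)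
    (M : Finset (ℝ × ℝ)) (hM : IsMinMM S T M)
    (a d : ℝ) (ha : a ∈ S) (hd : d ∈ T) (had : (a, d) ∈ M) :
    (a < d → ¬ ∃ b ∈ T, ∃ c ∈ S, a < b ∧ b < c ∧ c < d) ∧
    (d < a → ¬ ∃ c ∈ S, ∃ b ∈ T, d < c ∧ c < b ∧ b < a) :=
  stmt_4_general S T M hM a d had
end
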